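/- For every λ > 0 with λ ≠ 1, the Laplace transform of the distributed-order kernel k(t) = ∫₀^1 t^{α-1}/Γ(α) dα satisfies K(λ) = ∫₀^∞ e^{-λt} (∫₀^1 t^{α-1}/Γ(α) dα) dt = (λ - 1)/(λ log λ). -/

import Mathlib

/-!
The integrand is nonnegative, so Fubini–Tonelli lets us integrate in `t` first. For each
`α > 0` the Gamma integral gives `∫₀^∞ e^{-λt} t^{α-1}/Γ(α) dt = λ^{-α}`, and
`∫₀^1 λ^{-α} dα = (1 - λ⁻¹)/log λ = (λ - 1)/(λ log λ)`.
-/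

open MeasureTheory Set Real

theorem integral_integral_swap_of_nonneg {α β : Type*} [MeasurableSpace α] [MeasurableSpace β]
    {μ : Measure α} {ν : Measure β} [SFinite μ] [SFinite ν] {f : α × β → ℝ}
    (hf : AEStronglyMeasurable f (μ.prod ν))
    (hf_nonneg : ∀ᵐ y ∂ν, 0 ≤ᵐ[μ] fun x => f (x, y))
    (hf_int : ∀ᵐ y ∂ν, Integrable (fun x => f (x, y)) μ)
    (hf_int_int : Integrable (fun y => ∫ x, f (x, y) ∂μ) ν) :
    ∫ x, ∫ y, f (x, y) ∂ν ∂μ = ∫ y, ∫ x, f (x, y) ∂μ ∂ν := by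
  refine integral_integral_swap ((integrable_prod_iff' hf).2 ⟨hf_int, hf_int_int.congr ?_⟩)
  filter_upwards [hf_nonneg] with y hy
  refine integral_congr_ae ?_
  filter_upwards [hy] with x hx
  exact (Real.norm_of_nonneg hx).symm

theorem integral_exp_neg_mul_mul_rpow_div_Gamma_Ioi {a r : ℝ} (ha : 0 < a) (hr : 0 < r) :
    ∫ t in Ioi (0 : ℝ), exp (-(r * t)) * (t ^ (a - 1) / Gamma a) = (1 / r) ^ a := by
  simp_rw [mul_div_assoc', mul_comm (exp _)]
  rw [integral_div, integral_rpow_mul_exp_neg_mul_Ioi ha hr, mul_div_assoc,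
    div_self (Gamma_pos_of_pos ha).ne', mul_one]

theorem integral_Ioo_zero_one_rpow {b : ℝ} (hb : 0 < b) (hb1 : b ≠ 1) :
    ∫ α in Ioo (0 : ℝ) 1, b ^ α = (b - 1) / log b := by
  have hlog : log b ≠ 0 := log_ne_zero_of_pos_of_ne_one hb hb1
  have hderiv : ∀ α ∈ uIcc (0 : ℝ) 1, HasDerivAt (fun α => b ^ α / log b) (b ^ α) α := by
    intro α _
    simpa [mul_div_assoc, hlog] using (hasStrictDerivAt_const_rpow hb α).hasDerivAt.div_const (log b)
  rw [← integral_Ioc_eq_integral_Ioo, ← intervalIntegral.integral_of_le zero_le_one,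
    intervalIntegral.integral_eq_sub_of_hasDerivAt hderiv
      ((continuous_const_rpow hb.ne').intervalIntegrable _ _)]
  simp [sub_div]

theorem continuousOn_rpow_sub_one_div_Gamma :
    ContinuousOn (fun p : ℝ × ℝ => p.1 ^ (p.2 - 1) / Gamma p.2) (Ioi 0 ×ˢ Ioi 0) := by
  rintro ⟨t, α⟩ ⟨ht, hα⟩
  refine ContinuousWithinAt.div ?_ ?_ (Gamma_pos_of_pos hα).ne'
  · exact (continuousAt_fst.rpow (continuousAt_snd.sub continuousAt_const)
      (Or.inl (ne_of_gt ht))).continuousWithinAt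
  · exact (differentiableOn_Gamma_Ioi.continuousOn.comp continuousOn_snd fun p hp => hp.2) _
      ⟨ht, hα⟩

theorem aestronglyMeasurable_exp_neg_mul_mul_rpow_div_Gamma (r : ℝ) :
    AEStronglyMeasurable (fun p : ℝ × ℝ => exp (-(r * p.1)) * (p.1 ^ (p.2 - 1) / Gamma p.2))
      ((volume.restrict (Ioi 0)).prod (volume.restrict (Ioo 0 1))) := by
  rw [Measure.prod_restrict]
  refine ContinuousOn.aestronglyMeasurable ?_ (measurableSet_Ioi.prod measurableSet_Ioo)
  exact (by fun_prop : Continuous fun p : ℝ × ℝ => exp (-(r * p.1))).continuousOn.mul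
    (continuousOn_rpow_sub_one_div_Gamma.mono (prod_mono subset_rfl Ioo_subset_Ioi_self))

theorem integral_Ioi_exp_neg_mul_mul_integral_Ioo_rpow_div_Gamma {r : ℝ} (hr : 0 < r) :
    ∫ t in Ioi (0 : ℝ), exp (-(r * t)) * ∫ α in Ioo (0 : ℝ) 1, t ^ (α - 1) / Gamma α
      = ∫ α in Ioo (0 : ℝ) 1, (1 / r) ^ α := by
  set F : ℝ × ℝ → ℝ := fun p => exp (-(r * p.1)) * (p.1 ^ (p.2 - 1) / Gamma p.2)
  have hslice : ∀ α ∈ Ioo (0 : ℝ) 1, ∫ t in Ioi 0, F (t, α) = (1 / r) ^ α :=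
    fun α hα => integral_exp_neg_mul_mul_rpow_div_Gamma_Ioi hα.1 hr
  have hF_nonneg : ∀ᵐ α ∂volume.restrict (Ioo (0 : ℝ) 1),
      0 ≤ᵐ[volume.restrict (Ioi 0)] fun t => F (t, α) := by
    refine (ae_restrict_iff' measurableSet_Ioo).2 (.of_forall fun α hα => ?_)
    refine (ae_restrict_iff' measurableSet_Ioi).2 (.of_forall fun t (ht : 0 < t) => ?_)
    have := Gamma_pos_of_pos hα.1
    positivity
  have hF_int : ∀ᵐ α ∂volume.restrict (Ioo (0 : ℝ) 1),
      Integrable (fun t => F (t, α)) (volume.restrict (Ioi 0)) := by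
    refine (ae_restrict_iff' measurableSet_Ioo).2 (.of_forall fun α hα => ?_)
    exact .of_integral_ne_zero (by rw [hslice α hα]; positivity)
  have hF_int_int : IntegrableOn (fun α => ∫ t in Ioi 0, F (t, α)) (Ioo 0 1) :=
    ((continuous_const_rpow (one_div_pos.2 hr).ne').integrableOn_Icc.mono_set
      Ioo_subset_Icc_self).congr_fun (fun α hα => (hslice α hα).symm) measurableSet_Ioo
  calc _ = ∫ t in Ioi 0, ∫ α in Ioo 0 1, F (t, α) := by simp_rw [F, integral_const_mul]
    _ = ∫ α in Ioo 0 1, ∫ t in Ioi 0, F (t, α) :=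
      integral_integral_swap_of_nonneg (aestronglyMeasurable_exp_neg_mul_mul_rpow_div_Gamma r)
        hF_nonneg hF_int hF_int_int
    _ = _ := setIntegral_congr_fun measurableSet_Ioo hslice

/-- **Laplace transform of the distributed-order kernel.**
For every `λ > 0` with `λ ≠ 1`,
`∫₀^∞ e^{-λt} (∫₀^1 t^{α-1}/Γ(α) dα) dt = (λ - 1)/(λ log λ)`. -/
theorem laplace_transform_distributed_order_kernel
    (lam : ℝ) (hlam : 0 < lam) (hne : lam ≠ 1) :
    ∫ t in Set.Ioi (0 : ℝ),
        Real.exp (-(lam * t)) * ∫ α in Set.Ioo (0 : ℝ) 1, t ^ (α - 1) / Real.Gamma α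
      = (lam - 1) / (lam * Real.log lam) := by
  have hinv_ne_one : 1 / lam ≠ 1 := by simpa [eq_comm] using hne
  rw [integral_Ioi_exp_neg_mul_mul_integral_Ioo_rpow_div_Gamma hlam,
    integral_Ioo_zero_one_rpow (one_div_pos.2 hlam) hinv_ne_one, one_div, log_inv]
  field_simp
  ring
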